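/- Let κ_1, …, κ_N be nonnegative reals, not all equal. Then there exists α > 0 such that (Σ_i e^{−2ακ_i} κ_i²)/(Σ_j e^{−ακ_j})² < (1/N²) Σ_i κ_i². In other words, exponential down-weighting of high-κ samples strictly reduces the variance of the averaged estimator for some positive temperature α. -/

import Mathlib

/-!
With `A α = ∑ e^{-2ακᵢ} κᵢ²`, `B α = ∑ e^{-ακⱼ}` and `S = ∑ κᵢ²`, the claim is `g α > 0` for
`g α = S · (B α)² - N² · A α`. Now `g 0 = 0` and `g' 0 = 2N (N ∑ κᵢ³ - ∑ κᵢ · ∑ κᵢ²)`, which is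
positive by the strict Chebyshev sum inequality for the similarly ordered sequences `κ` and `κ²`;
hence `g` is positive just to the right of `0`.
-/

open Finset Real

section Chebyshev

variable {ι : Type*} [Fintype ι]

theorem sum_sum_sub_mul_sub {R : Type*} [CommRing R] (f g : ι → R) :
    ∑ i, ∑ j, (f i - f j) * (g i - g j)
      = 2 * (Fintype.card ι * ∑ i, f i * g i - (∑ i, f i) * ∑ i, g i) := by
  simp only [sub_mul, mul_sub, sum_sub_distrib, ← mul_sum, ← sum_mul, sum_const, card_univ,
    nsmul_eq_mul, mul_left_comm (f _) (Fintype.card ι : R)]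
  ring

theorem sum_mul_sum_lt_card_mul_sum {R : Type*} [CommRing R] [LinearOrder R]
    [IsStrictOrderedRing R] {f g : ι → R} (h : ∀ i j, 0 ≤ (f i - f j) * (g i - g j))
    (hlt : ∃ i j, 0 < (f i - f j) * (g i - g j)) :
    (∑ i, f i) * ∑ i, g i < Fintype.card ι * ∑ i, f i * g i := by
  obtain ⟨i₀, j₀, hpos⟩ := hlt
  have : 0 < ∑ i, ∑ j, (f i - f j) * (g i - g j) :=
    sum_pos' (fun i _ => sum_nonneg fun j _ => h i j)
      ⟨i₀, mem_univ _, sum_pos' (fun j _ => h i₀ j) ⟨j₀, mem_univ _, hpos⟩⟩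
  rw [sum_sum_sub_mul_sub] at this
  linarith

theorem sum_mul_sum_sq_lt_card_mul_sum_pow_three {κ : ι → ℝ} (hκ : ∀ i, 0 ≤ κ i)
    (hne : ∃ i j, κ i ≠ κ j) :
    (∑ i, κ i) * ∑ i, κ i ^ 2 < Fintype.card ι * ∑ i, κ i ^ 3 := by
  have factor (i j : ι) :
      (κ i - κ j) * (κ i ^ 2 - κ j ^ 2) = (κ i - κ j) ^ 2 * (κ i + κ j) := by
    ring
  simp only [pow_succ' _ 2]
  refine sum_mul_sum_lt_card_mul_sum (fun i j => ?_) ?_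
  · rw [factor]
    exact mul_nonneg (sq_nonneg _) (add_nonneg (hκ i) (hκ j))
  · obtain ⟨i, j, hij⟩ := hne
    refine ⟨i, j, ?_⟩
    have hsum : 0 < κ i + κ j := by
      by_contra! hle
      exact hij (by linarith [hκ i, hκ j])
    rw [factor]
    exact mul_pos (sq_pos_of_ne_zero (sub_ne_zero.2 hij)) hsum

end Chebyshev

theorem hasDerivAt_sum_exp_mul_mul {ι : Type*} [Fintype ι] (c w : ι → ℝ) :
    HasDerivAt (fun α => ∑ i, exp (α * c i) * w i) (∑ i, c i * w i) 0 := by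
  refine HasDerivAt.fun_sum fun i _ => ?_
  simpa using (((hasDerivAt_id (0 : ℝ)).mul_const (c i)).exp).mul_const (w i)

theorem HasDerivAt.exists_gt_of_deriv_pos {f : ℝ → ℝ} {f' x : ℝ} (hf : HasDerivAt f f' x)
    (hf' : 0 < f') : ∃ y, x < y ∧ f x < f y := by
  obtain ⟨t, hslope, ht⟩ :=
    ((hf.tendsto_slope_zero_right.eventually (lt_mem_nhds hf')).and self_mem_nhdsWithin).exists
  refine ⟨x + t, lt_add_of_pos_right x ht, ?_⟩
  have := (smul_pos_iff_of_pos_left (inv_pos.2 ht)).1 hslope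
  linarith

theorem exists_variance_reducing_temperature_general (N : ℕ) (κ : Fin N → ℝ)
    (hκ : ∀ i, 0 ≤ κ i) (hne : ∃ i j, κ i ≠ κ j) :
    ∃ α : ℝ, 0 < α ∧
      (∑ i, Real.exp (-2 * α * κ i) * κ i ^ 2) / (∑ j, Real.exp (-α * κ j)) ^ 2
        < (1 / (N : ℝ) ^ 2) * ∑ i, κ i ^ 2 := by
  obtain ⟨i₀, -⟩ := id hne
  have hN : (0 : ℝ) < N := by exact_mod_cast i₀.pos
  set S := ∑ i, κ i ^ 2
  set A : ℝ → ℝ := fun α => ∑ i, Real.exp (-2 * α * κ i) * κ i ^ 2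
  set B : ℝ → ℝ := fun α => ∑ j, Real.exp (-α * κ j)
  have hA : HasDerivAt A (-2 * ∑ i, κ i ^ 3) 0 := by
    convert hasDerivAt_sum_exp_mul_mul (fun i => -2 * κ i) (fun i => κ i ^ 2) using 1
    · ext α; congr! 3; ring
    · rw [mul_sum]; exact sum_congr rfl fun i _ => by ring
  have hB : HasDerivAt B (-∑ i, κ i) 0 := by
    convert hasDerivAt_sum_exp_mul_mul (fun i => -κ i) 1 using 1
    · ext α; simp [B, mul_comm]
    · simp
  have hgap : HasDerivAt (fun α => S * B α ^ 2 - N ^ 2 * A α)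
      (2 * N * (N * ∑ i, κ i ^ 3 - (∑ i, κ i) * S)) 0 := by
    refine (((hB.pow 2).const_mul S).sub (hA.const_mul ((N : ℝ) ^ 2))).congr_deriv ?_
    simp only [B, neg_mul, zero_mul, neg_zero, exp_zero, sum_const, card_univ,
      Fintype.card_fin, nsmul_eq_mul, mul_one]
    ring
  have hcheb := sum_mul_sum_sq_lt_card_mul_sum_pow_three hκ hne
  rw [Fintype.card_fin] at hcheb
  obtain ⟨α, hα, hlt⟩ := hgap.exists_gt_of_deriv_pos <| by
    have := sub_pos.2 hcheb
    positivity
  have hA0 : A 0 = S := by simp [A, S]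
  have hB0 : B 0 = N := by simp [B]
  have hBα : 0 < B α := sum_pos (fun j _ => exp_pos _) ⟨i₀, mem_univ _⟩
  rw [hA0, hB0] at hlt
  refine ⟨α, hα, ?_⟩
  rw [div_lt_iff₀ (by positivity), one_div_mul_eq_div, div_mul_eq_mul_div,
    lt_div_iff₀ (by positivity)]
  linarith

/-- Variance reduction via CoV weighting: for nonnegative `κᵢ` not all equal, there is
a temperature `α > 0` at which the exponentially-weighted estimator has strictly
smaller variance than the uniform average. -/
theorem exists_variance_reducing_temperature (N : ℕ) (hN : 0 < N) (κ : Fin N → ℝ)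
    (hκ : ∀ i, 0 ≤ κ i) (hne : ∃ i j, κ i ≠ κ j) :
    ∃ α : ℝ, 0 < α ∧
      (∑ i, Real.exp (-2 * α * κ i) * κ i ^ 2) / (∑ j, Real.exp (-α * κ j)) ^ 2
        < (1 / (N : ℝ) ^ 2) * ∑ i, κ i ^ 2 :=
  exists_variance_reducing_temperature_general N κ hκ hne
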